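/- Let c, c' be integers and define the binary relation R on finite sets of integers by: R A B holds iff A is nonempty, A = B ∪ {min A}, and c ≤ max A − min A ≤ c'. Then for all finite sets of integers A and A', the reflexive–transitive closure of R relates A to A' if and only if A = A', or there exists a nonempty finite set of integers A'' such that A'' = A' ∪ {min A''}, c ≤ max A − min A ≤ c', c ≤ max A'' − min A'' ≤ c', A'' ⊆ A, and if A \ A'' is nonempty then max(A \ A'') < min A''. -/
import Mathlib

/-- Minimum of a finite set of integers (default 0 on the empty set). -/
def zmin (A : Finset ℤ) : ℤ := if h : A.Nonempty then A.min' h else 0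

/-- Maximum of a finite set of integers (default 0 on the empty set). -/
def zmax (A : Finset ℤ) : ℤ := if h : A.Nonempty then A.max' h else 0

lemma zmin_mem {A : Finset ℤ} (h : A.Nonempty) : zmin A ∈ A := by
  simp only [zmin, dif_pos h]; exact A.min'_mem h

lemma zmax_mem {A : Finset ℤ} (h : A.Nonempty) : zmax A ∈ A := by
  simp only [zmax, dif_pos h]; exact A.max'_mem h

lemma zmin_le {A : Finset ℤ} {x : ℤ} (hx : x ∈ A) : zmin A ≤ x := by
  have h : A.Nonempty := ⟨x, hx⟩
  simp only [zmin, dif_pos h]; exact A.min'_le x hx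

lemma le_zmax {A : Finset ℤ} {x : ℤ} (hx : x ∈ A) : x ≤ zmax A := by
  have h : A.Nonempty := ⟨x, hx⟩
  simp only [zmax, dif_pos h]; exact A.le_max' x hx

lemma zmax_lt_iff {S : Finset ℤ} (h : S.Nonempty) {m : ℤ} :
    zmax S < m ↔ ∀ x ∈ S, x < m := by
  simp only [zmax, dif_pos h]; exact S.max'_lt_iff h

def StepRel (c c' : ℤ) : Finset ℤ → Finset ℤ → Prop := fun X Y =>
  X.Nonempty ∧ X = Y ∪ {zmin X} ∧ c ≤ zmax X - zmin X ∧ zmax X - zmin X ≤ c'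

lemma chain (c c' : ℤ) (A'' : Finset ℤ) (h'' : A''.Nonempty)
    (hc1 : c ≤ zmax A'' - zmin A'') (hc2 : zmax A'' - zmin A'' ≤ c') :
    ∀ n (A : Finset ℤ), (A \ A'').card = n → A'' ⊆ A →
      (∀ x ∈ A \ A'', x < zmin A'') →
      c ≤ zmax A - zmin A → zmax A - zmin A ≤ c' →
      Relation.ReflTransGen (StepRel c c') A A'' := by
  intro n
  induction n with
  | zero =>
    intro A hcard hsub hlt h1 h2
    have hAsub : A ⊆ A'' := by
      intro x hx
      by_contra hxn
      have : x ∈ A \ A'' := Finset.mem_sdiff.mpr ⟨hx, hxn⟩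
      have := Finset.card_pos.mpr ⟨x, this⟩
      omega
    have : A = A'' := Finset.Subset.antisymm hAsub hsub
    subst this
    exact Relation.ReflTransGen.refl
  | succ n ih =>
    intro A hcard hsub hlt h1 h2
    have hAne : A.Nonempty := h''.mono hsub
    have hd : (A \ A'').Nonempty := Finset.card_pos.mp (by omega)
    have hminA : zmin A ∈ A := zmin_mem hAne
    have hmin_notin : zmin A ∉ A'' := by
      intro hmem
      obtain ⟨y, hy⟩ := hd
      have h1' : y < zmin A'' := hlt y hy
      have h2' : zmin A'' ≤ zmin A := zmin_le hmem
      have h3' : zmin A ≤ y := zmin_le (Finset.mem_sdiff.mp hy).1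
      omega
    have hmind : zmin A ∈ A \ A'' := Finset.mem_sdiff.mpr ⟨hminA, hmin_notin⟩
    set B := A.erase (zmin A) with hB
    have hsubB : A'' ⊆ B := by
      intro x hx
      exact Finset.mem_erase.mpr ⟨fun h => hmin_notin (h ▸ hx), hsub hx⟩
    have hBne : B.Nonempty := h''.mono hsubB
    have hBsubA : B ⊆ A := Finset.erase_subset _ _
    have hstep : StepRel c c' A B := by
      refine ⟨hAne, ?_, h1, h2⟩
      rw [Finset.union_comm, ← Finset.insert_eq, hB, Finset.insert_erase hminA]
    have hmaxB1 : zmax A'' ≤ zmax B := le_zmax (hsubB (zmax_mem h''))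
    have hminB1 : zmin B ≤ zmin A'' := zmin_le (hsubB (zmin_mem h''))
    have hmaxB2 : zmax B ≤ zmax A := le_zmax (hBsubA (zmax_mem hBne))
    have hminB2 : zmin A ≤ zmin B := zmin_le (hBsubA (zmin_mem hBne))
    have hBsd : B \ A'' = (A \ A'').erase (zmin A) := by
      rw [hB, Finset.erase_sdiff_comm]
    have hcardB : (B \ A'').card = n := by
      rw [hBsd, Finset.card_erase_of_mem hmind]; omega
    refine Relation.ReflTransGen.head hstep (ih B hcardB hsubB ?_ (by omega) (by omega))
    intro x hx
    exact hlt x (hBsd ▸ hx |> Finset.erase_subset _ _)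

theorem stmt_4 (c c' : ℤ) (A A' : Finset ℤ) :
    Relation.ReflTransGen
      (fun X Y : Finset ℤ => X.Nonempty ∧ X = Y ∪ {zmin X} ∧
        c ≤ zmax X - zmin X ∧ zmax X - zmin X ≤ c') A A' ↔
    (A = A' ∨
      ∃ A'' : Finset ℤ, A''.Nonempty ∧ A'' = A' ∪ {zmin A''} ∧
        c ≤ zmax A - zmin A ∧ zmax A - zmin A ≤ c' ∧
        c ≤ zmax A'' - zmin A'' ∧ zmax A'' - zmin A'' ≤ c' ∧
        A'' ⊆ A ∧ ((A \ A'').Nonempty → zmax (A \ A'') < zmin A'')) := by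
  constructor
  · intro h
    induction h with
    | refl => exact Or.inl rfl
    | @tail b A' hab hbc ih =>
      obtain ⟨hbne, hbeq, hbc1, hbc2⟩ := hbc
      rcases ih with rfl | ⟨C, hCne, hCeq, hA1, hA2, hC1, hC2, hCsub, hClt⟩
      · refine Or.inr ⟨A, hbne, hbeq, hbc1, hbc2, hbc1, hbc2, Finset.Subset.refl _, ?_⟩
        intro hne; simp at hne
      · -- A'' := b
        have hbsubC : b ⊆ C := by
          intro x hx; rw [hCeq]; exact Finset.mem_union_left _ hx
        have hClt' : ∀ x ∈ A \ C, x < zmin C := by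
          intro x hx
          have := hClt ⟨x, hx⟩
          exact lt_of_le_of_lt (le_zmax hx) this
        have hminCb : zmin C ≤ zmin b := zmin_le (hbsubC (zmin_mem hbne))
        refine Or.inr ⟨b, hbne, hbeq, hA1, hA2, hbc1, hbc2, hbsubC.trans hCsub, ?_⟩
        intro hne
        rw [zmax_lt_iff hne]
        intro x hx
        obtain ⟨hxA, hxb⟩ := Finset.mem_sdiff.mp hx
        by_cases hxC : x ∈ C
        · have : x ∈ b ∪ {zmin C} := hCeq ▸ hxC
          rcases Finset.mem_union.mp this with h | h
          · exact absurd h hxb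
          · have hx' : x = zmin C := Finset.mem_singleton.mp h
            have hne' : x ≠ zmin b := fun h => hxb (h ▸ zmin_mem hbne)
            omega
        · exact lt_of_lt_of_le (hClt' x (Finset.mem_sdiff.mpr ⟨hxA, hxC⟩)) hminCb
  · rintro (rfl | ⟨A'', h'', heq, hA1, hA2, hc1, hc2, hsub, hlt⟩)
    · exact Relation.ReflTransGen.refl
    · have hlt' : ∀ x ∈ A \ A'', x < zmin A'' := by
        intro x hx
        exact lt_of_le_of_lt (le_zmax hx) (hlt ⟨x, hx⟩)
      have hchain := chain c c' A'' h'' hc1 hc2 (A \ A'').card A rfl hsub hlt' hA1 hA2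
      exact hchain.tail ⟨h'', heq, hc1, hc2⟩
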